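/- Let X_1,…,X_n be independent uniform random points in [0,1]² and fix a constant integer t > 1. Then in expectation there is a set L of O(n^{(t+1)/(2t+1)}) lines such that every face of the arrangement of L contains at most t of the points. -/

import Mathlib

open MeasureTheory

def SepLine (ℓ : ℝ × ℝ × ℝ) (p q : ℝ × ℝ) : Prop :=
  (ℓ.1 * p.1 + ℓ.2.1 * p.2 + ℓ.2.2) * (ℓ.1 * q.1 + ℓ.2.1 * q.2 + ℓ.2.2) < 0

/-- The uniform probability measure on the unit square `[0,1]²`. -/
noncomputable def unifSq : Measure (ℝ × ℝ) :=
  volume.restrict (Set.Icc 0 1 ×ˢ Set.Icc 0 1)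

/-- The minimum number of lines such that no face of their arrangement contains more
than `t` of the points `ω`: every `t+1` of the points contain a pair strictly
separated by one of the lines. -/
noncomputable def tSepNum (n t : ℕ) (ω : Fin n → ℝ × ℝ) : ℕ :=
  sInf {m : ℕ | ∃ L : Finset (ℝ × ℝ × ℝ), L.card = m ∧
    ∀ S : Finset (Fin n), S.card = t + 1 →
      ∃ i ∈ S, ∃ j ∈ S, i ≠ j ∧ ∃ ℓ ∈ L, SepLine ℓ (ω i) (ω j)}

noncomputable section
open Classical

/-- perpendicular-bisector-type separating line -/
def bisLine (p q : ℝ × ℝ) : ℝ × ℝ × ℝ :=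
  (2*(q.1-p.1), 2*(q.2-p.2), p.1^2+p.2^2-q.1^2-q.2^2)

lemma sepLine_bisLine {p q : ℝ × ℝ} (h : p ≠ q) : SepLine (bisLine p q) p q := by
  have hne : (p.1-q.1)^2 + (p.2-q.2)^2 > 0 := by
    have : p.1 ≠ q.1 ∨ p.2 ≠ q.2 := by
      by_contra hc
      push_neg at hc
      exact h (Prod.ext hc.1 hc.2)
    rcases this with h1 | h2
    · have : (p.1 - q.1) ≠ 0 := sub_ne_zero.mpr h1
      positivity
    · have : (p.2 - q.2) ≠ 0 := sub_ne_zero.mpr h2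
      positivity
  unfold SepLine bisLine
  simp only
  nlinarith [sq_nonneg (p.1-q.1), sq_nonneg (p.2-q.2)]

lemma sepLine_vert {c : ℝ} {p q : ℝ × ℝ} (h1 : p.1 < c) (h2 : c < q.1) :
    SepLine (1, 0, -c) p q := by
  unfold SepLine; simp only
  nlinarith

lemma sepLine_horiz {c : ℝ} {p q : ℝ × ℝ} (h1 : p.2 < c) (h2 : c < q.2) :
    SepLine (0, 1, -c) p q := by
  unfold SepLine; simp only
  nlinarith

lemma sepLine_symm {ℓ : ℝ × ℝ × ℝ} {p q : ℝ × ℝ} (h : SepLine ℓ p q) : SepLine ℓ q p := by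
  unfold SepLine at *; linarith [h, mul_comm (ℓ.1 * p.1 + ℓ.2.1 * p.2 + ℓ.2.2) (ℓ.1 * q.1 + ℓ.2.1 * q.2 + ℓ.2.2)]

/-- pick a separating line for a finite set of points (if it has two distinct points) -/
def pickLine (P : Finset (ℝ × ℝ)) : ℝ × ℝ × ℝ :=
  if h : ∃ pq : (ℝ × ℝ) × (ℝ × ℝ), pq.1 ∈ P ∧ pq.2 ∈ P ∧ pq.1 ≠ pq.2 then
    bisLine h.choose.1 h.choose.2
  else (0, 0, 0)

lemma pickLine_spec {P : Finset (ℝ × ℝ)}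
    (h : ∃ pq : (ℝ × ℝ) × (ℝ × ℝ), pq.1 ∈ P ∧ pq.2 ∈ P ∧ pq.1 ≠ pq.2) :
    ∃ p ∈ P, ∃ q ∈ P, p ≠ q ∧ SepLine (pickLine P) p q := by
  refine ⟨h.choose.1, h.choose_spec.1, h.choose.2, h.choose_spec.2.1, h.choose_spec.2.2, ?_⟩
  rw [pickLine, dif_pos h]
  exact sepLine_bisLine h.choose_spec.2.2

end

noncomputable section
open Classical Finset


def cell (N k l : ℕ) : Set (ℝ × ℝ) :=
  Set.Ioo ((k:ℝ)/N) (((k:ℝ)+1)/N) ×ˢ Set.Ioo ((l:ℝ)/N) (((l:ℝ)+1)/N)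

def gridLines (N : ℕ) : Finset (ℝ × ℝ × ℝ) :=
  ((Finset.range N).image fun k : ℕ => ((1:ℝ), (0:ℝ), -((k:ℝ)/N))) ∪
  ((Finset.range N).image fun k : ℕ => ((0:ℝ), (1:ℝ), -((k:ℝ)/N)))

lemma gridLines_card (N : ℕ) : (gridLines N).card ≤ 2 * N := by
  calc (gridLines N).card ≤ _ + _ := Finset.card_union_le _ _
    _ ≤ N + N := by
        gcongr <;> exact (Finset.card_image_le).trans (le_of_eq (Finset.card_range N))
    _ = 2 * N := by ring

lemma vert_mem_gridLines {N k : ℕ} (hk : k < N) :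
    ((1:ℝ), (0:ℝ), -((k:ℝ)/N)) ∈ gridLines N :=
  Finset.mem_union_left _ (Finset.mem_image.mpr ⟨k, Finset.mem_range.mpr hk, rfl⟩)

lemma horiz_mem_gridLines {N k : ℕ} (hk : k < N) :
    ((0:ℝ), (1:ℝ), -((k:ℝ)/N)) ∈ gridLines N :=
  Finset.mem_union_right _ (Finset.mem_image.mpr ⟨k, Finset.mem_range.mpr hk, rfl⟩)

def badSets (n t N : ℕ) (ω : Fin n → ℝ × ℝ) : Finset (Finset (Fin n)) :=
  Finset.univ.filter fun S => S.card = t + 1 ∧ ∃ k < N, ∃ l < N, ∀ i ∈ S, ω i ∈ cell N k l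

lemma not_sepLine_self (ℓ : ℝ × ℝ × ℝ) (p : ℝ × ℝ) : ¬ SepLine ℓ p p := by
  unfold SepLine
  exact not_lt.mpr (mul_self_nonneg _)

lemma det_bound (n t N : ℕ) (ω : Fin n → ℝ × ℝ)
    (hcell : ∀ i, ∃ k < N, ∃ l < N, ω i ∈ cell N k l) :
    tSepNum n t ω ≤ 2 * N + (badSets n t N ω).card := by
  by_cases hdeg : ∃ S : Finset (Fin n), S.card = t + 1 ∧ ∀ i ∈ S, ∀ j ∈ S, ω i = ω j
  · -- all lines fail on S, so the defining set is empty and sInf = 0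
    have : {m : ℕ | ∃ L : Finset (ℝ × ℝ × ℝ), L.card = m ∧
        ∀ S : Finset (Fin n), S.card = t + 1 →
          ∃ i ∈ S, ∃ j ∈ S, i ≠ j ∧ ∃ ℓ ∈ L, SepLine ℓ (ω i) (ω j)} = ∅ := by
      obtain ⟨S, hS, hall⟩ := hdeg
      ext m
      simp only [Set.mem_setOf_eq, Set.mem_empty_iff_false, iff_false]
      rintro ⟨L, -, hL⟩
      obtain ⟨i, hi, j, hj, -, ℓ, -, hsep⟩ := hL S hS
      rw [hall i hi j hj] at hsep
      exact not_sepLine_self ℓ (ω j) hsep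
    rw [tSepNum, this]
    simp
  · push_neg at hdeg
    set L : Finset (ℝ × ℝ × ℝ) :=
      gridLines N ∪ (badSets n t N ω).image (fun S => pickLine (S.image ω)) with hLdef
    have hprop : ∀ S : Finset (Fin n), S.card = t + 1 →
        ∃ i ∈ S, ∃ j ∈ S, i ≠ j ∧ ∃ ℓ ∈ L, SepLine ℓ (ω i) (ω j) := by
      intro S hS
      by_cases hbad : S ∈ badSets n t N ω
      · -- S has two distinct points; pickLine separates them
        obtain ⟨i, hi, j, hj, hne⟩ := hdeg S hS
        have hP : ∃ pq : (ℝ × ℝ) × (ℝ × ℝ), pq.1 ∈ S.image ω ∧ pq.2 ∈ S.image ω ∧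
            pq.1 ≠ pq.2 :=
          ⟨(ω i, ω j), Finset.mem_image_of_mem ω hi, Finset.mem_image_of_mem ω hj, hne⟩
        obtain ⟨p, hp, q, hq, hpq, hsep⟩ := pickLine_spec hP
        obtain ⟨i₀, hi₀, rfl⟩ := Finset.mem_image.mp hp
        obtain ⟨j₀, hj₀, rfl⟩ := Finset.mem_image.mp hq
        refine ⟨i₀, hi₀, j₀, hj₀, ?_, pickLine (S.image ω),
          Finset.mem_union_right _ (Finset.mem_image_of_mem _ hbad), hsep⟩
        rintro rfl; exact hpq rfl
      · -- two points of S land in different cells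
        have hScard : S.Nonempty := Finset.card_pos.mp (by omega)
        obtain ⟨i₀, hi₀⟩ := hScard
        obtain ⟨k, hk, l, hl, hmem⟩ := hcell i₀
        have hnotall : ¬ ∀ i ∈ S, ω i ∈ cell N k l := by
          intro hall
          exact hbad (Finset.mem_filter.mpr ⟨Finset.mem_univ _, hS, k, hk, l, hl, hall⟩)
        push_neg at hnotall
        obtain ⟨j, hj, hjnot⟩ := hnotall
        obtain ⟨k', hk', l', hl', hmem'⟩ := hcell j
        have hNpos : (0:ℝ) < N := by exact_mod_cast (Nat.zero_le k).trans_lt hk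
        have hij : i₀ ≠ j := by rintro rfl; exact hjnot hmem
        obtain ⟨hx, hy⟩ := hmem
        obtain ⟨hx', hy'⟩ := hmem'
        have hkl : k ≠ k' ∨ l ≠ l' := by
          by_contra hc; push_neg at hc
          exact hjnot (by rw [hc.1, hc.2]; exact ⟨hx', hy'⟩)
        rcases hkl with hkk | hll
        · rcases Nat.lt_or_ge k k' with h | h
          · refine ⟨i₀, hi₀, j, hj, hij, ((1:ℝ), (0:ℝ), -((k':ℝ)/N)), ?_, ?_⟩
            · exact Finset.mem_union_left _ (vert_mem_gridLines hk')
            · refine sepLine_vert ?_ hx'.1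
              calc (ω i₀).1 < ((k:ℝ)+1)/N := hx.2
                _ ≤ (k':ℝ)/N := by
                    gcongr
                    exact_mod_cast Nat.succ_le_of_lt h
          · have h' : k' < k := by omega
            refine ⟨j, hj, i₀, hi₀, hij.symm, ((1:ℝ), (0:ℝ), -((k:ℝ)/N)), ?_, ?_⟩
            · exact Finset.mem_union_left _ (vert_mem_gridLines hk)
            · refine sepLine_vert ?_ hx.1
              calc (ω j).1 < ((k':ℝ)+1)/N := hx'.2
                _ ≤ (k:ℝ)/N := by
                    gcongr
                    exact_mod_cast Nat.succ_le_of_lt h'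
        · rcases Nat.lt_or_ge l l' with h | h
          · refine ⟨i₀, hi₀, j, hj, hij, ((0:ℝ), (1:ℝ), -((l':ℝ)/N)), ?_, ?_⟩
            · exact Finset.mem_union_left _ (horiz_mem_gridLines hl')
            · refine sepLine_horiz ?_ hy'.1
              calc (ω i₀).2 < ((l:ℝ)+1)/N := hy.2
                _ ≤ (l':ℝ)/N := by
                    gcongr
                    exact_mod_cast Nat.succ_le_of_lt h
          · have h' : l' < l := by omega
            refine ⟨j, hj, i₀, hi₀, hij.symm, ((0:ℝ), (1:ℝ), -((l:ℝ)/N)), ?_, ?_⟩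
            · exact Finset.mem_union_left _ (horiz_mem_gridLines hl)
            · refine sepLine_horiz ?_ hy.1
              calc (ω j).2 < ((l':ℝ)+1)/N := hy'.2
                _ ≤ (l:ℝ)/N := by
                    gcongr
                    exact_mod_cast Nat.succ_le_of_lt h'
    have hmem : L.card ∈ {m : ℕ | ∃ L' : Finset (ℝ × ℝ × ℝ), L'.card = m ∧
        ∀ S : Finset (Fin n), S.card = t + 1 →
          ∃ i ∈ S, ∃ j ∈ S, i ≠ j ∧ ∃ ℓ ∈ L', SepLine ℓ (ω i) (ω j)} := ⟨L, rfl, hprop⟩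
    calc tSepNum n t ω ≤ L.card := Nat.sInf_le hmem
      _ ≤ (gridLines N).card + ((badSets n t N ω).image _).card := Finset.card_union_le _ _
      _ ≤ 2 * N + (badSets n t N ω).card := by
          gcongr
          · exact gridLines_card N
          · exact Finset.card_image_le


instance : IsProbabilityMeasure unifSq := by
  constructor
  rw [unifSq, Measure.restrict_apply_univ, Measure.volume_eq_prod, Measure.prod_prod,
    Real.volume_Icc]
  norm_num

lemma measurableSet_cell (N k l : ℕ) : MeasurableSet (cell N k l) :=
  (measurableSet_Ioo).prod (measurableSet_Ioo)

lemma unifSq_cell_le (N k l : ℕ) :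
    unifSq (cell N k l) ≤ ENNReal.ofReal (1/(N:ℝ)) * ENNReal.ofReal (1/(N:ℝ)) := by
  rw [unifSq, Measure.restrict_apply (measurableSet_cell N k l)]
  refine le_trans (measure_mono Set.inter_subset_left) ?_
  rw [cell, Measure.volume_eq_prod, Measure.prod_prod, Real.volume_Ioo, Real.volume_Ioo]
  have h1 : ((k:ℝ)+1)/N - (k:ℝ)/N = 1/(N:ℝ) := by rw [div_sub_div_same]; ring_nf
  have h2 : ((l:ℝ)+1)/N - (l:ℝ)/N = 1/(N:ℝ) := by rw [div_sub_div_same]; ring_nf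
  rw [h1, h2]

def cellEvent (n : ℕ) (S : Finset (Fin n)) (N k l : ℕ) : Set (Fin n → ℝ × ℝ) :=
  Set.univ.pi fun i => if i ∈ S then cell N k l else Set.univ

lemma measurableSet_cellEvent (n : ℕ) (S : Finset (Fin n)) (N k l : ℕ) :
    MeasurableSet (cellEvent n S N k l) := by
  refine MeasurableSet.univ_pi fun i => ?_
  split_ifs
  · exact measurableSet_cell N k l
  · exact MeasurableSet.univ

lemma pi_cellEvent (n : ℕ) (S : Finset (Fin n)) (N k l : ℕ) :
    (Measure.pi fun _ : Fin n => unifSq) (cellEvent n S N k l) =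
      unifSq (cell N k l) ^ S.card := by
  rw [cellEvent, Measure.pi_pi]
  have : ∀ i : Fin n, (unifSq (if i ∈ S then cell N k l else Set.univ)) =
      (if i ∈ S then unifSq (cell N k l) else 1) := by
    intro i; split_ifs
    · rfl
    · exact measure_univ
  simp_rw [this]
  rw [Finset.prod_ite_mem, Finset.univ_inter, Finset.prod_const]

lemma exists_cell_index {N : ℕ} (hN : 0 < N) {x : ℝ} (hx0 : 0 ≤ x) (hx1 : x ≤ 1)
    (hbad : ∀ k ≤ N, x ≠ (k:ℝ)/N) :
    ∃ k < N, x ∈ Set.Ioo ((k:ℝ)/N) (((k:ℝ)+1)/N) := by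
  have hNR : (0:ℝ) < N := by exact_mod_cast hN
  have hx0' : 0 < x := by
    rcases eq_or_lt_of_le hx0 with h | h
    · exact absurd (by simpa using h.symm : x = ((0:ℕ):ℝ)/N) (hbad 0 (Nat.zero_le N))
    · exact h
  have hx1' : x < 1 := by
    rcases eq_or_lt_of_le hx1 with h | h
    · exact absurd (by rw [h, div_self hNR.ne'] : x = (N:ℝ)/N) (hbad N le_rfl)
    · exact h
  set k := ⌊x * N⌋₊ with hk
  have hklt : k < N := by
    have hxN : x * N < N := by nlinarith
    exact Nat.floor_lt (by positivity) |>.mpr (by exact_mod_cast hxN)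
  refine ⟨k, hklt, ?_, ?_⟩
  · have hle : (k : ℝ) ≤ x * N := Nat.floor_le (by positivity)
    have hne : (k : ℝ) ≠ x * N := by
      intro h
      exact (hbad k hklt.le) (by field_simp [h.symm]; exact h.symm)
    rw [div_lt_iff₀ hNR]
    exact lt_of_le_of_ne hle hne
  · rw [lt_div_iff₀ hNR]
    exact Nat.lt_floor_add_one (x * N)

def GoodPt (N : ℕ) (p : ℝ × ℝ) : Prop :=
  p ∈ Set.Icc (0:ℝ) 1 ×ˢ Set.Icc (0:ℝ) 1 ∧
    (∀ k ≤ N, p.1 ≠ (k:ℝ)/N) ∧ (∀ k ≤ N, p.2 ≠ (k:ℝ)/N)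

lemma unifSq_badPts (N : ℕ) : unifSq {p : ℝ × ℝ | ¬ GoodPt N p} = 0 := by
  have hsub : {p : ℝ × ℝ | ¬ GoodPt N p} ⊆
      (Set.Icc (0:ℝ) 1 ×ˢ Set.Icc (0:ℝ) 1)ᶜ ∪
        ⋃ k : ℕ, (({((k:ℝ)/N)} : Set ℝ) ×ˢ (Set.univ : Set ℝ) ∪
          (Set.univ : Set ℝ) ×ˢ ({((k:ℝ)/N)} : Set ℝ)) := by
    intro p hp
    rw [Set.mem_setOf_eq, GoodPt] at hp
    by_cases hsq : p ∈ Set.Icc (0:ℝ) 1 ×ˢ Set.Icc (0:ℝ) 1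
    · by_cases h1 : ∀ k ≤ N, p.1 ≠ (k:ℝ)/N
      · have h2 : ¬ ∀ k ≤ N, p.2 ≠ (k:ℝ)/N := fun h => hp ⟨hsq, h1, h⟩
        push_neg at h2
        obtain ⟨k, -, hk⟩ := h2
        exact Or.inr (Set.mem_iUnion.mpr ⟨k, Or.inr ⟨trivial, hk⟩⟩)
      · push_neg at h1
        obtain ⟨k, -, hk⟩ := h1
        exact Or.inr (Set.mem_iUnion.mpr ⟨k, Or.inl ⟨hk, trivial⟩⟩)
    · exact Or.inl hsq
  refine measure_mono_null hsub (measure_union_null ?_ ?_)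
  · rw [unifSq, Measure.restrict_apply (by measurability)]
    simp
  · refine measure_iUnion_null fun k => measure_union_null ?_ ?_ <;>
    · refine le_antisymm (le_trans (Measure.restrict_le_self _) ?_) (by simp)
      rw [Measure.volume_eq_prod, Measure.prod_prod]
      simp

lemma ae_good (n N : ℕ) :
    ∀ᵐ ω ∂(Measure.pi fun _ : Fin n => unifSq), ∀ i, GoodPt N (ω i) := by
  rw [ae_all_iff]
  intro i
  rw [ae_iff]
  have hset : {ω : Fin n → ℝ × ℝ | ¬ GoodPt N (ω i)} =
      Set.univ.pi fun j => if j = i then {p : ℝ × ℝ | ¬ GoodPt N p} else Set.univ := by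
    ext ω
    simp only [Set.mem_setOf_eq, Set.mem_pi, Set.mem_univ, forall_true_left]
    constructor
    · intro h j
      split_ifs with hj
      · subst hj; exact h
      · trivial
    · intro h
      have := h i
      simpa using this
  rw [hset, Measure.pi_pi]
  have : ∀ j : Fin n, unifSq (if j = i then {p : ℝ × ℝ | ¬ GoodPt N p} else Set.univ) =
      if j = i then (0:ENNReal) else 1 := by
    intro j; split_ifs
    · exact unifSq_badPts N
    · exact measure_univ
  simp_rw [this]
  rw [Finset.prod_ite_eq' Finset.univ i (fun _ => (0:ENNReal))]
  simp

set_option maxHeartbeats 1000000 in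
lemma expectation_bound (n t N : ℕ) (hN : 0 < N) :
    (∫ ω, (tSepNum n t ω : ℝ) ∂(Measure.pi fun _ : Fin n => unifSq)) ≤
      2*(N:ℝ) + (n:ℝ)^(t+1) * ((N:ℝ)^2 * ((1/(N:ℝ))^2)^(t+1)) := by
  classical
  set μ := Measure.pi fun _ : Fin n => unifSq with hμ
  set g : (Fin n → ℝ × ℝ) → ℝ := fun ω => (2*(N:ℝ)) +
    ∑ S ∈ Finset.univ.powersetCard (t+1), ∑ p ∈ Finset.range N ×ˢ Finset.range N,
      (cellEvent n S N p.1 p.2).indicator (fun _ => (1:ℝ)) ω with hg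
  have hgint : Integrable g μ := by
    refine (integrable_const _).add ?_
    refine integrable_finset_sum _ fun S _ => integrable_finset_sum _ fun p _ => ?_
    exact (integrable_const (1:ℝ)).indicator (measurableSet_cellEvent n S N p.1 p.2)
  have hfg : ∀ᵐ ω ∂μ, (tSepNum n t ω : ℝ) ≤ g ω := by
    filter_upwards [ae_good n N] with ω hω
    have hcell : ∀ i, ∃ k < N, ∃ l < N, ω i ∈ cell N k l := by
      intro i
      obtain ⟨⟨hx, hy⟩, h1, h2⟩ := hω i
      obtain ⟨k, hk, hkx⟩ := exists_cell_index hN hx.1 hx.2 h1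
      obtain ⟨l, hl, hly⟩ := exists_cell_index hN hy.1 hy.2 h2
      exact ⟨k, hk, l, hl, hkx, hly⟩
    have hdet := det_bound n t N ω hcell
    have hcast : (tSepNum n t ω : ℝ) ≤ 2*(N:ℝ) + ((badSets n t N ω).card : ℝ) := by
      exact_mod_cast hdet
    refine hcast.trans (add_le_add (le_refl _) ?_)
    have hstep1 : ((badSets n t N ω).card : ℝ) = ∑ S ∈ badSets n t N ω, (1:ℝ) := by
      simp
    rw [hstep1]
    have hsub : badSets n t N ω ⊆ Finset.univ.powersetCard (t+1) := by
      intro S hS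
      rw [Finset.mem_powersetCard_univ]
      exact (Finset.mem_filter.mp hS).2.1
    refine le_trans (Finset.sum_le_sum ?_) (Finset.sum_le_sum_of_subset_of_nonneg hsub ?_)
    · intro S hS
      obtain ⟨-, -, k, hk, l, hl, hall⟩ := Finset.mem_filter.mp hS
      have hmem : ω ∈ cellEvent n S N k l := by
        rw [cellEvent, Set.mem_pi]
        intro i _
        split_ifs with hi
        · exact hall i hi
        · trivial
      have h1 : (cellEvent n S N k l).indicator (fun _ => (1:ℝ)) ω = 1 :=
        Set.indicator_of_mem hmem _
      have hsingle := Finset.single_le_sum (s := Finset.range N ×ˢ Finset.range N)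
        (f := fun p : ℕ × ℕ => (cellEvent n S N p.1 p.2).indicator (fun _ => (1:ℝ)) ω)
        (a := (k, l)) (fun p _ => Set.indicator_nonneg (fun _ _ => zero_le_one) ω)
        (Finset.mem_product.mpr ⟨Finset.mem_range.mpr hk, Finset.mem_range.mpr hl⟩)
      simp only at hsingle
      rw [h1] at hsingle
      exact hsingle
    · intro S _ _
      exact Finset.sum_nonneg fun p _ => Set.indicator_nonneg (fun _ _ => zero_le_one) ω
  have hμprob : IsProbabilityMeasure μ := by
    rw [hμ]; infer_instance
  have hintg : ∫ ω, g ω ∂μ = 2*(N:ℝ) +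
      ∑ S ∈ Finset.univ.powersetCard (t+1), ∑ p ∈ Finset.range N ×ˢ Finset.range N,
        (μ (cellEvent n S N p.1 p.2)).toReal := by
    rw [hg]
    rw [integral_add (integrable_const _) (integrable_finset_sum _ fun S _ =>
      integrable_finset_sum _ fun p _ =>
        (integrable_const (1:ℝ)).indicator (measurableSet_cellEvent n S N p.1 p.2))]
    rw [integral_const]
    simp only [probReal_univ, one_smul]
    congr 1
    rw [integral_finset_sum _ fun S _ => integrable_finset_sum _ fun p _ =>
      (integrable_const (1:ℝ)).indicator (measurableSet_cellEvent n S N p.1 p.2)]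
    refine Finset.sum_congr rfl fun S _ => ?_
    rw [integral_finset_sum _ fun p _ =>
      (integrable_const (1:ℝ)).indicator (measurableSet_cellEvent n S N p.1 p.2)]
    refine Finset.sum_congr rfl fun p _ => ?_
    rw [integral_indicator_const (1:ℝ) (measurableSet_cellEvent n S N p.1 p.2)]
    simp [Measure.real_def]
  have hterm : ∀ S ∈ Finset.univ.powersetCard (t+1), ∀ p ∈ Finset.range N ×ˢ Finset.range N,
      (μ (cellEvent n S N p.1 p.2)).toReal ≤ ((1/(N:ℝ))^2)^(t+1) := by
    intro S hS p _
    rw [hμ, pi_cellEvent, Finset.mem_powersetCard_univ.mp hS]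
    have hle : unifSq (cell N p.1 p.2) ^ (t+1) ≤
        (ENNReal.ofReal (1/(N:ℝ)) * ENNReal.ofReal (1/(N:ℝ))) ^ (t+1) :=
      pow_le_pow_left' (unifSq_cell_le N p.1 p.2) _
    have hne : (ENNReal.ofReal (1/(N:ℝ)) * ENNReal.ofReal (1/(N:ℝ))) ^ (t+1) ≠ ⊤ := by
      exact ENNReal.pow_ne_top (by finiteness)
    refine le_trans (ENNReal.toReal_mono hne hle) ?_
    rw [ENNReal.toReal_pow, ENNReal.toReal_mul, ENNReal.toReal_ofReal (by positivity)]
    apply le_of_eq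
    ring
  calc (∫ ω, (tSepNum n t ω : ℝ) ∂μ) ≤ ∫ ω, g ω ∂μ := by
        refine integral_mono_of_nonneg ?_ hgint hfg
        filter_upwards with ω
        exact Nat.cast_nonneg _
    _ = 2*(N:ℝ) + ∑ S ∈ Finset.univ.powersetCard (t+1),
          ∑ p ∈ Finset.range N ×ˢ Finset.range N, (μ (cellEvent n S N p.1 p.2)).toReal :=
        hintg
    _ ≤ 2*(N:ℝ) + ∑ S ∈ Finset.univ.powersetCard (t+1),
          ∑ p ∈ Finset.range N ×ˢ Finset.range N, ((1/(N:ℝ))^2)^(t+1) := by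
        gcongr with S hS p hp
        exact hterm S hS p hp
    _ = 2*(N:ℝ) + ((Finset.univ.powersetCard (t+1) : Finset (Finset (Fin n))).card : ℝ) *
          ((N:ℝ)^2 * ((1/(N:ℝ))^2)^(t+1)) := by
        rw [Finset.sum_const, Finset.sum_const, Finset.card_product, Finset.card_range]
        simp [mul_assoc, mul_comm, mul_left_comm]
        ring
    _ ≤ 2*(N:ℝ) + (n:ℝ)^(t+1) * ((N:ℝ)^2 * ((1/(N:ℝ))^2)^(t+1)) := by
        have hc : ((Finset.univ.powersetCard (t+1) : Finset (Finset (Fin n))).card : ℝ) ≤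
            (n:ℝ)^(t+1) := by
          rw [Finset.card_powersetCard, Finset.card_univ, Fintype.card_fin]
          exact_mod_cast Nat.choose_le_pow n (t+1)
        gcongr

theorem stmt_18' (t : ℕ) (ht : 1 < t) :
    ∃ C : ℝ, 0 < C ∧ ∃ n₀ : ℕ, ∀ n ≥ n₀,
      (∫ ω, (tSepNum n t ω : ℝ) ∂(Measure.pi fun _ : Fin n => unifSq)) ≤
        C * (n : ℝ) ^ (((t : ℝ) + 1) / (2 * (t : ℝ) + 1)) := by
  set α : ℝ := ((t : ℝ) + 1) / (2 * (t : ℝ) + 1) with hα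
  have hα0 : 0 < α := by positivity
  refine ⟨5, by norm_num, 1, fun n hn => ?_⟩
  have hn1 : (1:ℝ) ≤ (n:ℝ) := by exact_mod_cast hn
  have hnpos : (0:ℝ) < n := by linarith
  have hra : (1:ℝ) ≤ (n:ℝ)^α := Real.one_le_rpow hn1 hα0.le
  set N := ⌈(n:ℝ)^α⌉₊ with hN
  have hN0 : 0 < N := Nat.ceil_pos.mpr (by linarith)
  have hNreal : (0:ℝ) < N := by exact_mod_cast hN0
  have hNge : (n:ℝ)^α ≤ (N:ℝ) := Nat.le_ceil _
  have hNle : (N:ℝ) ≤ (n:ℝ)^α + 1 := (Nat.ceil_lt_add_one (by positivity)).le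
  refine le_trans (expectation_bound n t N hN0) ?_
  have hsimp : (N:ℝ)^2 * ((1/(N:ℝ))^2)^(t+1) = 1/(N:ℝ)^(2*t) := by
    rw [one_div_pow, one_div_pow, ← pow_mul, mul_one_div, div_eq_div_iff (by positivity) (by positivity)]
    ring
  rw [hsimp]
  have h1 : 2*(N:ℝ) ≤ 4 * (n:ℝ)^α := by nlinarith
  have key : (n:ℝ)^(t+1) * (1/(N:ℝ)^(2*t)) ≤ (n:ℝ)^α := by
    have hd : ((n:ℝ)^α)^(2*t) ≤ (N:ℝ)^(2*t) := pow_le_pow_left₀ (by positivity) hNge _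
    have hdpos : (0:ℝ) < ((n:ℝ)^α)^(2*t) := by positivity
    calc (n:ℝ)^(t+1) * (1/(N:ℝ)^(2*t)) = (n:ℝ)^(t+1) / (N:ℝ)^(2*t) := by ring
      _ ≤ (n:ℝ)^(t+1) / ((n:ℝ)^α)^(2*t) := by gcongr
      _ = (n:ℝ)^α := by
          rw [← Real.rpow_natCast (n:ℝ) (t+1), ← Real.rpow_natCast ((n:ℝ)^α) (2*t),
            ← Real.rpow_mul (by positivity), ← Real.rpow_sub hnpos]
          congr 1
          rw [hα]
          have h2t : (2 * (t:ℝ) + 1) ≠ 0 := by positivity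
          push_cast
          field_simp
          ring
  linarith

/-- For `n` independent uniform random points in `[0,1]²` and a fixed constant integer
`t > 1`, in expectation `O(n^{(t+1)/(2t+1)})` lines suffice so that every face of
their arrangement contains at most `t` of the points. -/
theorem stmt_18 (t : ℕ) (ht : 1 < t) :
    ∃ C : ℝ, 0 < C ∧ ∃ n₀ : ℕ, ∀ n ≥ n₀,
      (∫ ω, (tSepNum n t ω : ℝ) ∂(Measure.pi fun _ : Fin n => unifSq)) ≤
        C * (n : ℝ) ^ (((t : ℝ) + 1) / (2 * (t : ℝ) + 1)) := by
  exact stmt_18' t ht
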